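/- arXiv:2005.03062 — 2 statements merged into one kernel-verified Lean document; each statement's English description precedes it below -/
import Mathlib

section
/- Let g be a positive definite metric on a vector space T compatible with complex structures I and J, K a 2-form with KJ = -J*K, and define the variations İ = 0, J̇ = (1/2)[I,J]g^{-1}K, ġ = -(1/2)[K,I] (where [K,I] = KI - I*K : T → T*). Then the Poisson tensor σ = (1/2)[I,J]g^{-1} has vanishing derivative: σ̇ = (1/2)(İJ + IJ̇ - J̇I - Jİ)g^{-1} + (1/2)[I,J] g^{-1} [K,I] g^{-1} = 0. -/
/-!
Transposing the compatibility `I* g I = g` with `I² = -1` gives `g⁻¹ I* = -I g⁻¹`. With it, the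
terms of `σ̇` in which `I` stands between `g⁻¹` and `K` cancel, and what remains is
`(1/4) (I[I,J] + [I,J]I) g⁻¹ K g⁻¹`. The anticommutator vanishes because
`I[I,J] + [I,J]I = I²J - JI²` and `I²` is central.
-/

theorem mul_commutator_add_commutator_mul_eq_zero {R : Type*} [Ring R] {a b : R}
    (h : Commute (a * a) b) : a * (a * b - b * a) + (a * b - b * a) * a = 0 := by
  calc a * (a * b - b * a) + (a * b - b * a) * a = a * a * b - b * (a * a) := by noncomm_ring
    _ = 0 := by rw [h.eq, sub_self]

namespace LinearMap

variable {R M : Type*} [CommRing R] [AddCommGroup M] [Module R M]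
  {g : M →ₗ[R] Module.Dual R M} {I : Module.End R M}

theorem dualMap_comp_eq_neg_comp_of_dualMap_comp_comp_eq (hI : I * I = -1)
    (hIg : I.dualMap ∘ₗ g ∘ₗ I = g) : I.dualMap ∘ₗ g = -(g ∘ₗ I) := by
  calc I.dualMap ∘ₗ g = I.dualMap ∘ₗ g ∘ₗ I ∘ₗ (-I) := by
        rw [comp_neg, ← Module.End.mul_eq_comp, hI, neg_neg, Module.End.one_eq_id, comp_id]
    _ = (I.dualMap ∘ₗ g ∘ₗ I) ∘ₗ (-I) := by simp only [comp_assoc]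
    _ = -(g ∘ₗ I) := by rw [hIg, comp_neg]

theorem comp_dualMap_eq_neg_comp_of_dualMap_comp_comp_eq {gi : Module.Dual R M →ₗ[R] M}
    (hI : I * I = -1) (hIg : I.dualMap ∘ₗ g ∘ₗ I = g)
    (hgi1 : g ∘ₗ gi = id) (hgi2 : gi ∘ₗ g = id) : gi ∘ₗ I.dualMap = -(I ∘ₗ gi) := by
  calc gi ∘ₗ I.dualMap = gi ∘ₗ (I.dualMap ∘ₗ g) ∘ₗ gi := by
        rw [comp_assoc, hgi1, comp_id]
    _ = (gi ∘ₗ g) ∘ₗ (-(I ∘ₗ gi)) := by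
        rw [dualMap_comp_eq_neg_comp_of_dualMap_comp_comp_eq hI hIg]
        simp only [comp_assoc, neg_comp, comp_neg]
    _ = -(I ∘ₗ gi) := by rw [hgi2, id_comp]

end LinearMap

theorem stmt8_general (T : Type*) [AddCommGroup T] [Module ℝ T]
    (g K : T →ₗ[ℝ] Module.Dual ℝ T) (I J : Module.End ℝ T)
    (gi : Module.Dual ℝ T →ₗ[ℝ] T)
    (hI : I * I = -1)
    (hIg : I.dualMap ∘ₗ g ∘ₗ (I : T →ₗ[ℝ] T) = g)
    (hgi1 : g ∘ₗ gi = LinearMap.id) (hgi2 : gi ∘ₗ g = LinearMap.id)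
    -- the variation
    (gdot : T →ₗ[ℝ] Module.Dual ℝ T) (Idot Jdot : Module.End ℝ T)
    (hgdot : gdot = (-(1/2 : ℝ)) • (K ∘ₗ (I : T →ₗ[ℝ] T) - I.dualMap ∘ₗ K))
    (hIdot : Idot = 0)
    (hJdot : (Jdot : T →ₗ[ℝ] T)
      = (1/2 : ℝ) • (((I * J - J * I : Module.End ℝ T) : T →ₗ[ℝ] T) ∘ₗ gi ∘ₗ K)) :
    -- σ̇ = (1/2)(İJ + IJ̇ - J̇I - Jİ)g⁻¹ - (1/2)[I,J] g⁻¹ ġ g⁻¹ = 0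
    (1/2 : ℝ) • (((Idot * J + I * Jdot - Jdot * I - J * Idot : Module.End ℝ T) : T →ₗ[ℝ] T) ∘ₗ gi)
      - (1/2 : ℝ) • (((I * J - J * I : Module.End ℝ T) : T →ₗ[ℝ] T) ∘ₗ gi ∘ₗ gdot ∘ₗ gi)
      = 0 := by
  have hgiI : ∀ φ, gi (I.dualMap φ) = -I (gi φ) := fun φ => by
    simpa using LinearMap.congr_fun
      (LinearMap.comp_dualMap_eq_neg_comp_of_dualMap_comp_comp_eq hI hIg hgi1 hgi2) φ
  have hanti := mul_commutator_add_commutator_mul_eq_zero (b := J) (hI ▸ Commute.neg_one_left J)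
  subst hIdot hgdot
  ext f
  have hanti_f := LinearMap.congr_fun hanti (gi (K (gi f)))
  simp only [LinearMap.sub_apply, LinearMap.smul_apply, LinearMap.comp_apply,
    LinearMap.add_apply, LinearMap.zero_apply, Module.End.mul_apply, hJdot, hgiI,
    map_neg, map_sub, map_smul, map_zero] at hanti_f ⊢
  linear_combination (norm := module) (1/4 : ℝ) • hanti_f

/-- Under the canonical variation `İ = 0`, `J̇ = (1/2)[I,J]g⁻¹K`, `ġ = -(1/2)[K,I]`,
the Poisson tensor `σ = (1/2)[I,J]g⁻¹` has vanishing derivative. -/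
theorem stmt8 (T : Type*) [AddCommGroup T] [Module ℝ T] [FiniteDimensional ℝ T]
    (g K : T →ₗ[ℝ] Module.Dual ℝ T) (I J : Module.End ℝ T)
    (gi : Module.Dual ℝ T →ₗ[ℝ] T)
    (hI : I * I = -1) (hJ : J * J = -1)
    (hgsymm : ∀ x y : T, g x y = g y x)
    (hgpos : ∀ x : T, x ≠ 0 → 0 < g x x)
    (hIg : I.dualMap ∘ₗ g ∘ₗ (I : T →ₗ[ℝ] T) = g)
    (hJg : J.dualMap ∘ₗ g ∘ₗ (J : T →ₗ[ℝ] T) = g)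
    (hKskew : ∀ x y : T, K x y = - K y x)
    (hK11 : K ∘ₗ (J : T →ₗ[ℝ] T) = -(J.dualMap ∘ₗ K))
    (hgi1 : g ∘ₗ gi = LinearMap.id) (hgi2 : gi ∘ₗ g = LinearMap.id)
    -- the variation
    (gdot : T →ₗ[ℝ] Module.Dual ℝ T) (Idot Jdot : Module.End ℝ T)
    (hgdot : gdot = (-(1/2 : ℝ)) • (K ∘ₗ (I : T →ₗ[ℝ] T) - I.dualMap ∘ₗ K))
    (hIdot : Idot = 0)
    (hJdot : (Jdot : T →ₗ[ℝ] T)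
      = (1/2 : ℝ) • (((I * J - J * I : Module.End ℝ T) : T →ₗ[ℝ] T) ∘ₗ gi ∘ₗ K)) :
    -- σ̇ = (1/2)(İJ + IJ̇ - J̇I - Jİ)g⁻¹ - (1/2)[I,J] g⁻¹ ġ g⁻¹ = 0
    (1/2 : ℝ) • (((Idot * J + I * Jdot - Jdot * I - J * Idot : Module.End ℝ T) : T →ₗ[ℝ] T) ∘ₗ gi)
      - (1/2 : ℝ) • (((I * J - J * I : Module.End ℝ T) : T →ₗ[ℝ] T) ∘ₗ gi ∘ₗ gdot ∘ₗ gi)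
      = 0 :=
  stmt8_general T g K I J gi hI hIg hgi1 hgi2 gdot Idot Jdot hgdot hIdot hJdot
end

section
/- Let g be a metric compatible with complex structures I and J, ω_I = gI, ω_J = gJ, and K a skew 2-form with J*KJ = K. Then g(ω_I^{-1} - ω_J^{-1})K + K(ω_I^{-1} + ω_J^{-1})g = -(KI - I*K), i.e. the induced metric variation ġ = (1/2)g(ω_I^{-1}-ω_J^{-1})K + (1/2)K(ω_I^{-1}+ω_J^{-1})g equals -(1/2)[K,I]. -/
/-! Since `ω_I = gI` with `I*gI = g` and `I² = -1`, one has `g ω_I⁻¹ = I*` and `ω_I⁻¹ g = -I`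
(likewise for `J`). The left-hand side becomes `(I* - J*)K - K(I + J)`, and the `J`-terms cancel
by the `(1,1)` condition `KJ = -J*K`. -/

namespace LinearMap

open Module

variable {R M : Type*} [CommRing R] [AddCommGroup M] [Module R M]

theorem comp_rightInverse_eq_dualMap {g : M →ₗ[R] Dual R M} {I : End R M}
    {w : Dual R M →ₗ[R] M} (hIg : I.dualMap ∘ₗ g ∘ₗ I = g) (hw : (g ∘ₗ I) ∘ₗ w = id) :
    g ∘ₗ w = I.dualMap := by
  rw [← hIg, comp_assoc, comp_assoc, ← comp_assoc w, hw, comp_id]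

theorem leftInverse_comp_eq_neg {g : M →ₗ[R] Dual R M} {I : End R M}
    {w : Dual R M →ₗ[R] M} (hI : I * I = -1) (hw : w ∘ₗ (g ∘ₗ I) = id) :
    w ∘ₗ g = -I :=
  calc w ∘ₗ g = w ∘ₗ g ∘ₗ (-(I * I)) := by rw [hI, neg_neg]; rfl
    _ = (w ∘ₗ (g ∘ₗ I)) ∘ₗ (-I) := by
        simp only [End.mul_eq_comp, comp_neg, comp_assoc]
    _ = -I := by rw [hw, id_comp]

end LinearMap

open LinearMap in
theorem stmt19_general (T : Type*) [AddCommGroup T] [Module ℝ T]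
    (g K : T →ₗ[ℝ] Module.Dual ℝ T) (I J : Module.End ℝ T)
    (wIi wJi : Module.Dual ℝ T →ₗ[ℝ] T)
    (hI : I * I = -1) (hJ : J * J = -1)
    (hIg : I.dualMap ∘ₗ g ∘ₗ (I : T →ₗ[ℝ] T) = g)
    (hJg : J.dualMap ∘ₗ g ∘ₗ (J : T →ₗ[ℝ] T) = g)
    (hK11 : K ∘ₗ (J : T →ₗ[ℝ] T) = -(J.dualMap ∘ₗ K))
    (hwIi1 : (g ∘ₗ (I : T →ₗ[ℝ] T)) ∘ₗ wIi = LinearMap.id)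
    (hwIi2 : wIi ∘ₗ (g ∘ₗ (I : T →ₗ[ℝ] T)) = LinearMap.id)
    (hwJi1 : (g ∘ₗ (J : T →ₗ[ℝ] T)) ∘ₗ wJi = LinearMap.id)
    (hwJi2 : wJi ∘ₗ (g ∘ₗ (J : T →ₗ[ℝ] T)) = LinearMap.id) :
    g ∘ₗ (wIi - wJi) ∘ₗ K + K ∘ₗ (wIi + wJi) ∘ₗ g
      = -(K ∘ₗ (I : T →ₗ[ℝ] T) - I.dualMap ∘ₗ K) := by
  rw [sub_comp, comp_sub, add_comp, comp_add, ← comp_assoc, ← comp_assoc,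
    comp_rightInverse_eq_dualMap hIg hwIi1, comp_rightInverse_eq_dualMap hJg hwJi1,
    leftInverse_comp_eq_neg hI hwIi2, leftInverse_comp_eq_neg hJ hwJi2, comp_neg, comp_neg, hK11]
  abel

/-- The induced metric variation: for `K` skew of type `(1,1)` for `J`,
`g(ω_I⁻¹ - ω_J⁻¹)K + K(ω_I⁻¹ + ω_J⁻¹)g = -(KI - I*K)`, i.e. `ġ = -(1/2)[K,I]`. -/
theorem stmt19 (T : Type*) [AddCommGroup T] [Module ℝ T] [FiniteDimensional ℝ T]
    (g K : T →ₗ[ℝ] Module.Dual ℝ T) (I J : Module.End ℝ T)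
    (wIi wJi : Module.Dual ℝ T →ₗ[ℝ] T)
    (hI : I * I = -1) (hJ : J * J = -1)
    (hgsymm : ∀ x y : T, g x y = g y x)
    (hgpos : ∀ x : T, x ≠ 0 → 0 < g x x)
    (hIg : I.dualMap ∘ₗ g ∘ₗ (I : T →ₗ[ℝ] T) = g)
    (hJg : J.dualMap ∘ₗ g ∘ₗ (J : T →ₗ[ℝ] T) = g)
    (hKskew : ∀ x y : T, K x y = - K y x)
    (hK11 : K ∘ₗ (J : T →ₗ[ℝ] T) = -(J.dualMap ∘ₗ K))
    (hwIi1 : (g ∘ₗ (I : T →ₗ[ℝ] T)) ∘ₗ wIi = LinearMap.id)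
    (hwIi2 : wIi ∘ₗ (g ∘ₗ (I : T →ₗ[ℝ] T)) = LinearMap.id)
    (hwJi1 : (g ∘ₗ (J : T →ₗ[ℝ] T)) ∘ₗ wJi = LinearMap.id)
    (hwJi2 : wJi ∘ₗ (g ∘ₗ (J : T →ₗ[ℝ] T)) = LinearMap.id) :
    g ∘ₗ (wIi - wJi) ∘ₗ K + K ∘ₗ (wIi + wJi) ∘ₗ g
      = -(K ∘ₗ (I : T →ₗ[ℝ] T) - I.dualMap ∘ₗ K) :=
  stmt19_general T g K I J wIi wJi hI hJ hIg hJg hK11 hwIi1 hwIi2 hwJi1 hwJi2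
end
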